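/- (Theorem 2, Case (iii).) Let P ∈ ℝ^{n×n} be symmetric positive definite with nonpositive off-diagonal entries (−P is Metzler), Γ ∈ ℝ^{n×l₂} with Γ ≥ 0, and suppose PA − ΓC₂ ≥ 0 (entrywise). Set L := P⁻¹Γ. Then L ≥ 0 and A − LC₂ ≥ 0. Moreover, for any nonnegative sequence e^x_k ∈ ℝⁿ and vectors δ^ρ_k, δ^{ψ₂}_k, δ^v, δ^w, δ^ε ≥ 0 satisfying the error-dynamics equality e^x_{k+1} = |A−LC₂|·e^x_k + δ^ρ_k + |L|·δ^{ψ₂}_k + |Ŵ|·δ^w + (|V_a − LV_b| − |A−LC₂|·|ΛNV₂| + |ΛNV₂|)·δ^v + (|Λ| + |D_a − LD_b| − |A−LC₂|·|Λ|)·δ^ε and the bounds δ^ρ_k ≤ F̄_ρ·e^x_k, δ^{ψ₂}_k ≤ F̄_{ψ₂}·e^x_k, it holds that e^x_{k+1} ≤ (A − LC₂ + F̄_ρ + L·F̄_{ψ₂})·e^x_k + (L·|V₂| + |ΛNV₂| + |Λ(I−NC₂)G₁SV₁|)·δ^v + |Ŵ|·δ^w + |Λ|·δ^ε. -/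

import Mathlib

/-
A positive definite matrix `P` with nonpositive off-diagonal entries is inverse-positive: if
`P x ≥ 0`, pairing with `x⁻` gives `x⁻ ⬝ P x⁻ ≤ x⁻ ⬝ P x⁺ ≤ 0`, so `x⁻ = 0`. Since `P L = Γ` and
`P (A - L C₂) = P A - Γ C₂`, both `L` and `Q := A - L C₂` are nonnegative, hence `|L| = L` and
`|Q| = Q`. Writing `V_a - L V_b = Q (ΛNV₂) + L V₂ + Λ(I - NC₂)G₁SV₁` and `D_a - L D_b = Q Λ`, the
bound `|Q X| ≤ Q |X|` absorbs the correction terms `- |Q| |ΛNV₂|` and `- |Q| |Λ|` of the error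
dynamics.
-/

open Matrix

/-- Entrywise nonnegative part `M⁺ = max(M, 0)` of a real matrix. -/
noncomputable def matPos {m n : ℕ} (M : Matrix (Fin m) (Fin n) ℝ) : Matrix (Fin m) (Fin n) ℝ :=
  Matrix.of fun i j => max (M i j) 0

/-- Entrywise `M⁻ = M⁺ − M`. -/
noncomputable def matNeg {m n : ℕ} (M : Matrix (Fin m) (Fin n) ℝ) : Matrix (Fin m) (Fin n) ℝ :=
  matPos M - M

/-- Entrywise absolute value `|M| = M⁺ + M⁻`. -/
noncomputable def matAbs {m n : ℕ} (M : Matrix (Fin m) (Fin n) ℝ) : Matrix (Fin m) (Fin n) ℝ :=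
  matPos M + matNeg M

namespace Matrix

section OffDiagNonpos

variable {ι : Type*} [Fintype ι]

theorem dotProduct_mulVec_nonpos_of_offDiag_nonpos {P : Matrix ι ι ℝ}
    (hoff : ∀ i j, i ≠ j → P i j ≤ 0) {u v : ι → ℝ} (hu : 0 ≤ u) (hv : 0 ≤ v)
    (huv : ∀ i, u i * v i = 0) : u ⬝ᵥ P *ᵥ v ≤ 0 := by
  simp only [dotProduct, mulVec, Finset.mul_sum]
  refine Finset.sum_nonpos fun i _ => Finset.sum_nonpos fun j _ => ?_
  rcases eq_or_ne i j with rfl | hij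
  · rw [mul_left_comm, huv i, mul_zero]
  · exact mul_nonpos_of_nonneg_of_nonpos (hu i)
      (mul_nonpos_of_nonpos_of_nonneg (hoff i j hij) (hv j))

theorem PosDef.nonneg_of_mulVec_nonneg {P : Matrix ι ι ℝ} (hP : P.PosDef)
    (hoff : ∀ i j, i ≠ j → P i j ≤ 0) {x : ι → ℝ} (hx : 0 ≤ P *ᵥ x) : 0 ≤ x := by
  have hsupp : ∀ i, x⁻ i * x⁺ i = 0 := fun i => by
    rcases le_total (x i) 0 with h | h
    · simp [posPart_eq_zero.mpr h]
    · simp [negPart_eq_zero.mpr h]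
  have hquad : x⁻ ⬝ᵥ P *ᵥ x⁻ ≤ 0 := by
    have hsplit : x⁻ ⬝ᵥ P *ᵥ x = x⁻ ⬝ᵥ P *ᵥ x⁺ - x⁻ ⬝ᵥ P *ᵥ x⁻ := by
      rw [← dotProduct_sub, ← mulVec_sub, posPart_sub_negPart]
    have hpair : 0 ≤ x⁻ ⬝ᵥ P *ᵥ x := dotProduct_nonneg_of_nonneg (negPart_nonneg x) hx
    have hcross := dotProduct_mulVec_nonpos_of_offDiag_nonpos hoff (negPart_nonneg x)
      (posPart_nonneg x) hsupp
    linarith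
  have hneg : x⁻ = 0 := by
    by_contra hne
    have hpos := hP.dotProduct_mulVec_pos hne
    rw [star_trivial] at hpos
    linarith
  rw [← posPart_sub_negPart x, hneg, sub_zero]
  exact posPart_nonneg x

theorem PosDef.nonneg_of_mul_nonneg {κ : Type*} {P : Matrix ι ι ℝ} (hP : P.PosDef)
    (hoff : ∀ i j, i ≠ j → P i j ≤ 0) {X : Matrix ι κ ℝ}
    (hX : ∀ i j, 0 ≤ (P * X) i j)
    (i : ι) (j : κ) : 0 ≤ X i j :=
  hP.nonneg_of_mulVec_nonneg hoff (x := fun k => X k j) (fun k => hX k j) i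

end OffDiagNonpos

section OrderedSemiring

variable {m n R : Type*} [Fintype n] [Semiring R] [PartialOrder R] [IsOrderedRing R]

theorem mulVec_le_mulVec_of_nonneg {M : Matrix m n R} (hM : ∀ i j, 0 ≤ M i j) {u v : n → R}
    (huv : u ≤ v) : M *ᵥ u ≤ M *ᵥ v :=
  fun i => dotProduct_le_dotProduct_of_nonneg_left huv (hM i)

theorem mulVec_le_mulVec_of_le {M M' : Matrix m n R} (hMM' : ∀ i j, M i j ≤ M' i j)
    {v : n → R} (hv : 0 ≤ v) : M *ᵥ v ≤ M' *ᵥ v :=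
  fun i => dotProduct_le_dotProduct_of_nonneg_right (hMM' i) hv

end OrderedSemiring

end Matrix

section matAbs

variable {m n p : ℕ}

theorem matAbs_apply (M : Matrix (Fin m) (Fin n) ℝ) (i : Fin m) (j : Fin n) :
    matAbs M i j = |M i j| := by
  simp only [matAbs, matNeg, matPos, Matrix.add_apply, Matrix.sub_apply, Matrix.of_apply]
  rcases le_total 0 (M i j) with h | h
  · rw [max_eq_left h, abs_of_nonneg h]; ring
  · rw [max_eq_right h, abs_of_nonpos h]; ring

theorem matAbs_of_nonneg {M : Matrix (Fin m) (Fin n) ℝ} (hM : ∀ i j, 0 ≤ M i j) :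
    matAbs M = M := by
  ext i j
  rw [matAbs_apply, abs_of_nonneg (hM i j)]

theorem matAbs_mul_le (A : Matrix (Fin m) (Fin n) ℝ) (B : Matrix (Fin n) (Fin p) ℝ)
    (i : Fin m) (j : Fin p) : matAbs (A * B) i j ≤ (matAbs A * matAbs B) i j := by
  simp only [matAbs_apply, Matrix.mul_apply, ← abs_mul]
  exact Finset.abs_sum_le_sum_abs _ _

theorem matAbs_mul_le_mul_matAbs {Q : Matrix (Fin m) (Fin n) ℝ} (hQ : ∀ i j, 0 ≤ Q i j)
    (X : Matrix (Fin n) (Fin p) ℝ) (i : Fin m) (j : Fin p) :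
    matAbs (Q * X) i j ≤ (Q * matAbs X) i j := by
  simpa only [matAbs_of_nonneg hQ] using matAbs_mul_le Q X i j

theorem matAbs_mul_add_mul_add_sub_add_le {Q : Matrix (Fin m) (Fin m) ℝ}
    {K : Matrix (Fin m) (Fin n) ℝ} (hQ : ∀ i j, 0 ≤ Q i j) (hK : ∀ i j, 0 ≤ K i j)
    (X : Matrix (Fin m) (Fin p) ℝ) (Y : Matrix (Fin n) (Fin p) ℝ)
    (Z : Matrix (Fin m) (Fin p) ℝ)
    (i : Fin m) (j : Fin p) :
    (matAbs (Q * X + K * Y + Z) - Q * matAbs X + matAbs X) i j ≤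
      (K * matAbs Y + matAbs X + matAbs Z) i j := by
  have htri : matAbs (Q * X + K * Y + Z) i j ≤
      matAbs (Q * X) i j + matAbs (K * Y) i j + matAbs Z i j := by
    simp only [matAbs_apply, Matrix.add_apply]
    exact abs_add_three _ _ _
  simp only [Matrix.add_apply, Matrix.sub_apply]
  linarith [matAbs_mul_le_mul_matAbs hQ X i j, matAbs_mul_le_mul_matAbs hK Y i j]

theorem matAbs_add_matAbs_mul_sub_le {Q : Matrix (Fin m) (Fin m) ℝ} (hQ : ∀ i j, 0 ≤ Q i j)
    (X : Matrix (Fin m) (Fin n) ℝ) (i : Fin m) (j : Fin n) :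
    (matAbs X + matAbs (Q * X) - Q * matAbs X) i j ≤ matAbs X i j := by
  simp only [Matrix.add_apply, Matrix.sub_apply]
  linarith [matAbs_mul_le_mul_matAbs hQ X i j]

end matAbs

theorem iss_synthesis_case_iii_general
    {n nw nv p1 l2 : ℕ}
    (G1 : Matrix (Fin n) (Fin p1) ℝ)
    (V1 : Matrix (Fin p1) (Fin nv) ℝ) (V2 : Matrix (Fin l2) (Fin nv) ℝ)
    (C2 : Matrix (Fin l2) (Fin n) ℝ) (S : Matrix (Fin p1) (Fin p1) ℝ)
    (A Λ : Matrix (Fin n) (Fin n) ℝ) (N : Matrix (Fin n) (Fin l2) ℝ)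
    (Va : Matrix (Fin n) (Fin nv) ℝ)
    (hVa : Va = A * Λ * N * V2 + Λ * (1 - N * C2) * G1 * S * V1)
    (Vb : Matrix (Fin l2) (Fin nv) ℝ) (hVb : Vb = (C2 * Λ * N - 1) * V2)
    (Da : Matrix (Fin n) (Fin n) ℝ) (hDa : Da = A * Λ)
    (Db : Matrix (Fin l2) (Fin n) ℝ) (hDb : Db = C2 * Λ)
    (What : Matrix (Fin n) (Fin nw) ℝ)
    (Fρ : Matrix (Fin n) (Fin n) ℝ) (Fψ2 : Matrix (Fin l2) (Fin n) ℝ)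
    (P : Matrix (Fin n) (Fin n) ℝ) (hP : P.PosDef)
    (hPoff : ∀ i j, i ≠ j → P i j ≤ 0)
    (Γ : Matrix (Fin n) (Fin l2) ℝ) (hΓ : ∀ i j, 0 ≤ Γ i j)
    (hPA : ∀ i j, 0 ≤ (P * A - Γ * C2) i j)
    (L : Matrix (Fin n) (Fin l2) ℝ) (hL : L = P⁻¹ * Γ) :
    (∀ i j, 0 ≤ L i j) ∧
    (∀ i j, 0 ≤ (A - L * C2) i j) ∧
    (∀ (e : ℕ → Fin n → ℝ) (δρ : ℕ → Fin n → ℝ) (δψ2 : ℕ → Fin l2 → ℝ)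
      (δv : Fin nv → ℝ) (δw : Fin nw → ℝ) (δε : Fin n → ℝ),
      (∀ k, 0 ≤ e k) → (∀ k, 0 ≤ δρ k) → (∀ k, 0 ≤ δψ2 k) →
      0 ≤ δv → 0 ≤ δw → 0 ≤ δε →
      (∀ k, e (k + 1) =
        (matAbs (A - L * C2)).mulVec (e k) + δρ k + (matAbs L).mulVec (δψ2 k) +
        (matAbs What).mulVec δw +
        (matAbs (Va - L * Vb) - matAbs (A - L * C2) * matAbs (Λ * N * V2) +
          matAbs (Λ * N * V2)).mulVec δv +
        (matAbs Λ + matAbs (Da - L * Db) - matAbs (A - L * C2) * matAbs Λ).mulVec δε) →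
      (∀ k, δρ k ≤ Fρ.mulVec (e k)) → (∀ k, δψ2 k ≤ Fψ2.mulVec (e k)) →
      ∀ k, e (k + 1) ≤
        (A - L * C2 + Fρ + L * Fψ2).mulVec (e k) +
        (L * matAbs V2 + matAbs (Λ * N * V2) +
          matAbs (Λ * (1 - N * C2) * G1 * S * V1)).mulVec δv +
        (matAbs What).mulVec δw +
        (matAbs Λ).mulVec δε) := by
  have hdet : IsUnit P.det := (isUnit_iff_isUnit_det P).mp hP.isUnit
  have hPL : P * L = Γ := by rw [hL, mul_nonsing_inv_cancel_left P Γ hdet]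
  have hL_nonneg : ∀ i j, 0 ≤ L i j := hP.nonneg_of_mul_nonneg hPoff (hPL ▸ hΓ)
  have hQ_nonneg : ∀ i j, 0 ≤ (A - L * C2) i j :=
    hP.nonneg_of_mul_nonneg hPoff (by rwa [Matrix.mul_sub, ← Matrix.mul_assoc, hPL])
  refine ⟨hL_nonneg, hQ_nonneg, ?_⟩
  intro e δρ δψ2 δv δw δε _ _ _ hδv _ hδε hdyn hρ hψ k
  set Q := A - L * C2
  have hVab : Va - L * Vb = Q * (Λ * N * V2) + L * V2 + Λ * (1 - N * C2) * G1 * S * V1 := by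
    rw [hVa, hVb]
    simp only [Q, Matrix.sub_mul, Matrix.mul_sub, Matrix.one_mul, Matrix.mul_one, Matrix.mul_assoc]
    abel
  have hDab : Da - L * Db = Q * Λ := by rw [hDa, hDb, Matrix.sub_mul, Matrix.mul_assoc]
  have hsplit : (Q + Fρ + L * Fψ2) *ᵥ e k = Q *ᵥ e k + Fρ *ᵥ e k + L *ᵥ Fψ2 *ᵥ e k := by
    rw [add_mulVec, add_mulVec, mulVec_mulVec]
  rw [hdyn k, matAbs_of_nonneg hQ_nonneg, matAbs_of_nonneg hL_nonneg, hVab, hDab, hsplit]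
  calc _ ≤ Q *ᵥ e k + Fρ *ᵥ e k + L *ᵥ Fψ2 *ᵥ e k + matAbs What *ᵥ δw +
        (L * matAbs V2 + matAbs (Λ * N * V2) + matAbs (Λ * (1 - N * C2) * G1 * S * V1)) *ᵥ δv +
        matAbs Λ *ᵥ δε := by
        gcongr
        · exact hρ k
        · exact mulVec_le_mulVec_of_nonneg hL_nonneg (hψ k)
        · exact mulVec_le_mulVec_of_le (matAbs_mul_add_mul_add_sub_add_le hQ_nonneg hL_nonneg _ _ _)
            hδv
        · exact mulVec_le_mulVec_of_le (matAbs_add_matAbs_mul_sub_le hQ_nonneg Λ) hδε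
    _ = _ := by abel

/-- Theorem 2, Case (iii): positivity of the designed gain and the
linear comparison system for the error dynamics. -/
theorem iss_synthesis_case_iii
    {n nw nv p1 l2 : ℕ}
    (W : Matrix (Fin n) (Fin nw) ℝ) (G1 : Matrix (Fin n) (Fin p1) ℝ)
    (V1 : Matrix (Fin p1) (Fin nv) ℝ) (V2 : Matrix (Fin l2) (Fin nv) ℝ)
    (C2 : Matrix (Fin l2) (Fin n) ℝ) (S : Matrix (Fin p1) (Fin p1) ℝ)
    (A Λ : Matrix (Fin n) (Fin n) ℝ) (N : Matrix (Fin n) (Fin l2) ℝ)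
    (Va : Matrix (Fin n) (Fin nv) ℝ)
    (hVa : Va = A * Λ * N * V2 + Λ * (1 - N * C2) * G1 * S * V1)
    (Vb : Matrix (Fin l2) (Fin nv) ℝ) (hVb : Vb = (C2 * Λ * N - 1) * V2)
    (Da : Matrix (Fin n) (Fin n) ℝ) (hDa : Da = A * Λ)
    (Db : Matrix (Fin l2) (Fin n) ℝ) (hDb : Db = C2 * Λ)
    (What : Matrix (Fin n) (Fin nw) ℝ) (hWhat : What = Λ * (1 - N * C2) * W)
    (Fρ : Matrix (Fin n) (Fin n) ℝ) (Fψ2 : Matrix (Fin l2) (Fin n) ℝ)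
    (hFρ : ∀ i j, 0 ≤ Fρ i j) (hFψ2 : ∀ i j, 0 ≤ Fψ2 i j)
    (P : Matrix (Fin n) (Fin n) ℝ) (hP : P.PosDef)
    (hPoff : ∀ i j, i ≠ j → P i j ≤ 0)
    (Γ : Matrix (Fin n) (Fin l2) ℝ) (hΓ : ∀ i j, 0 ≤ Γ i j)
    (hPA : ∀ i j, 0 ≤ (P * A - Γ * C2) i j)
    (L : Matrix (Fin n) (Fin l2) ℝ) (hL : L = P⁻¹ * Γ) :
    (∀ i j, 0 ≤ L i j) ∧
    (∀ i j, 0 ≤ (A - L * C2) i j) ∧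
    (∀ (e : ℕ → Fin n → ℝ) (δρ : ℕ → Fin n → ℝ) (δψ2 : ℕ → Fin l2 → ℝ)
      (δv : Fin nv → ℝ) (δw : Fin nw → ℝ) (δε : Fin n → ℝ),
      (∀ k, 0 ≤ e k) → (∀ k, 0 ≤ δρ k) → (∀ k, 0 ≤ δψ2 k) →
      0 ≤ δv → 0 ≤ δw → 0 ≤ δε →
      (∀ k, e (k + 1) =
        (matAbs (A - L * C2)).mulVec (e k) + δρ k + (matAbs L).mulVec (δψ2 k) +
        (matAbs What).mulVec δw +
        (matAbs (Va - L * Vb) - matAbs (A - L * C2) * matAbs (Λ * N * V2) +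
          matAbs (Λ * N * V2)).mulVec δv +
        (matAbs Λ + matAbs (Da - L * Db) - matAbs (A - L * C2) * matAbs Λ).mulVec δε) →
      (∀ k, δρ k ≤ Fρ.mulVec (e k)) → (∀ k, δψ2 k ≤ Fψ2.mulVec (e k)) →
      ∀ k, e (k + 1) ≤
        (A - L * C2 + Fρ + L * Fψ2).mulVec (e k) +
        (L * matAbs V2 + matAbs (Λ * N * V2) +
          matAbs (Λ * (1 - N * C2) * G1 * S * V1)).mulVec δv +
        (matAbs What).mulVec δw +
        (matAbs Λ).mulVec δε) :=
  iss_synthesis_case_iii_general G1 V1 V2 C2 S A Λ N Va hVa Vb hVb Da hDa Db hDb What Fρ Fψ2 P hP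
    hPoff Γ hΓ hPA L hL
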